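/- Let L be a finite lattice and suppose ⊥ = x_0 ⋖ x_1 ⋖ ⋯ ⋖ x_k = ⊤ is a maximal chain of L each of whose elements is left modular. Let λ be the labeling assigning to each cover relation y ⋖ z the unique index i such that x_{i+1}/x_i weakly separates y ⋖ z. Then λ is an EL-labeling: for every w ≤ z in L, the interval [w, z] has exactly one maximal chain whose λ-label sequence, read from bottom to top, is weakly increasing, and the label sequence of this chain is strictly lexicographically smaller than the label sequence of every other maximal chain of [w, z]. -/

import Mathlib

/-! Fix `w < z` and let `i` be the first index with `x (i+1) ⊓ z ≰ w`. Left modularity of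
`x i ⋖ x (i+1)` makes `w' = w ⊔ (x (i+1) ⊓ z)` cover `w`; the cover `w ⋖ w'` has label
`i`, every cover `w ⋖ u ≤ z` has label `≥ i` with equality only for `u = w'`, and every
cover inside `[w', z]` has label `> i`. A chain of `[w, z]` whose labels all exceed `i`
would make `x (i+1) ⊓ -` decrease along it, forcing `x (i+1) ⊓ z ≤ w`; so an increasing
chain starts with `w ⋖ w'`. Induction then gives an increasing chain that is
lexicographically smallest among all chains with a different vertex set, and uniqueness
follows from asymmetry of the lexicographic order. -/

def IsLeftModular {L : Type*} [Lattice L] (a : L) : Prop :=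
  ∀ y z : L, y ≤ z → (y ⊔ a) ⊓ z = y ⊔ (a ⊓ z)

theorem IsLeftModular.le_of_inf_le_of_le_sup {L : Type*} [Lattice L] {a y u : L}
    (ha : IsLeftModular a) (hyu : y ≤ u) (hau : a ⊓ u ≤ y) (hu : u ≤ a ⊔ y) : u ≤ y :=
  calc u = (y ⊔ a) ⊓ u := (inf_eq_right.2 (sup_comm a y ▸ hu)).symm
    _ = y ⊔ (a ⊓ u) := ha y u hyu
    _ ≤ y := sup_le le_rfl hau

theorem Fin.monotone_cons {α : Type*} [Preorder α] {m : ℕ} {a : α} {g : Fin m → α}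
    (hg : Monotone g) (ha : ∀ i, a ≤ g i) : Monotone (Fin.cons a g : Fin (m + 1) → α) := by
  refine Fin.monotone_iff_le_succ.2 fun i => ?_
  cases m with
  | zero => exact i.elim0
  | succ m =>
    cases i using Fin.cases with
    | zero => exact ha 0
    | succ j => exact hg j.castSucc_le_succ

theorem Fin.exists_castSucc_and_not_succ {k : ℕ} {P : Fin (k + 1) → Prop} (h0 : P 0)
    (hlast : ¬ P (Fin.last k)) : ∃ i : Fin k, P i.castSucc ∧ ¬ P i.succ := by
  induction k with
  | zero => exact absurd h0 hlast
  | succ k ih =>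
    by_cases h : P (Fin.last k).castSucc
    · exact ⟨Fin.last k, h, hlast⟩
    · obtain ⟨i, hi, hi'⟩ := ih (P := fun j => P j.castSucc) h0 h
      exact ⟨i.castSucc, hi, hi'⟩

section CoverChain

variable {L : Type*} {k n : ℕ}

def chainLabels (lab : L → L → Fin k) (d : Fin (n + 1) → L) (j : Fin n) : Fin k :=
  lab (d j.castSucc) (d j.succ)

theorem chainLabels_cons (lab : L → L → Fin k) (w : L) (d : Fin (n + 1) → L) :
    chainLabels lab (Fin.cons w d : Fin (n + 2) → L) =
      Fin.cons (lab w (d 0)) (chainLabels lab d) := by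
  funext j
  cases j using Fin.cases with
  | zero => rfl
  | succ j => rfl

variable [Preorder L]

def IsCoverChain (d : Fin (n + 1) → L) : Prop :=
  ∀ j : Fin n, d j.castSucc ⋖ d j.succ

theorem IsCoverChain.strictMono {d : Fin (n + 1) → L} (hd : IsCoverChain d) : StrictMono d :=
  Fin.strictMono_iff_lt_succ.2 fun j => (hd j).lt

theorem IsCoverChain.eq_zero_iff {d : Fin (n + 1) → L} (hd : IsCoverChain d) :
    n = 0 ↔ d 0 = d (Fin.last n) := by
  refine ⟨fun h => by subst h; rfl, fun h => ?_⟩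
  exact Fin.last_eq_zero_iff.1 (hd.strictMono.injective h).symm

theorem IsCoverChain.le_last {d : Fin (n + 1) → L} (hd : IsCoverChain d) (j : Fin (n + 1)) :
    d j ≤ d (Fin.last n) :=
  hd.strictMono.monotone (Fin.le_last j)

theorem IsCoverChain.tail {d : Fin (n + 2) → L} (hd : IsCoverChain d) :
    IsCoverChain (Fin.tail d) :=
  fun j => hd j.succ

theorem IsCoverChain.cons {w : L} {d : Fin (n + 1) → L} (hw : w ⋖ d 0) (hd : IsCoverChain d) :
    IsCoverChain (Fin.cons w d : Fin (n + 2) → L) := by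
  intro j
  cases j using Fin.cases with
  | zero => exact hw
  | succ j => exact hd j

end CoverChain

theorem CovBy.covBy_sup_inf {L : Type*} [Lattice L] {a b w z : L} (hab : a ⋖ b)
    (ha : IsLeftModular a) (hb : IsLeftModular b) (hwz : w ≤ z) (haz : a ⊓ z ≤ w)
    (hbz : ¬ b ⊓ z ≤ w) : w ⋖ w ⊔ (b ⊓ z) := by
  refine ⟨left_lt_sup.2 hbz, fun c hwc hcw' => ?_⟩
  have hcz : c ≤ z := hcw'.le.trans (sup_le hwz inf_le_right)
  rcases hab.eq_or_eq (c := b ⊓ (c ⊔ a)) (le_inf hab.le le_sup_right) inf_le_left with h | h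
  · have hc : c ≤ w ⊔ a :=
      calc c ≤ (w ⊔ b) ⊓ (c ⊔ a) :=
            le_inf (hcw'.le.trans (sup_le_sup_left inf_le_left w)) le_sup_left
        _ = w ⊔ (b ⊓ (c ⊔ a)) := hb w (c ⊔ a) (hwc.le.trans le_sup_left)
        _ = w ⊔ a := by rw [h]
    refine hwc.not_ge ?_
    calc c ≤ (w ⊔ a) ⊓ z := le_inf hc hcz
      _ = w := by rw [ha w z hwz, sup_eq_left.2 haz]
  · refine hcw'.not_ge (sup_le hwc.le ?_)
    calc b ⊓ z ≤ (c ⊔ a) ⊓ z := inf_le_inf_right z (inf_eq_left.1 h)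
      _ = c := by rw [ha c z hcz, sup_eq_left.2 (haz.trans hwc.le)]

section WeakSeparation

variable {L : Type*} [Lattice L] {k : ℕ} {x : Fin (k + 1) → L} {lab : L → L → Fin k}

def WeaklySeparates (x : Fin (k + 1) → L) (i : Fin k) (y z : L) : Prop :=
  x i.castSucc ⊓ z = x i.castSucc ⊓ y ∧ x i.succ ⊔ z = x i.succ ⊔ y

theorem lt_label_succ_of_inf_le (hx : Monotone x) (hlm : ∀ i, IsLeftModular (x i))
    (hlab : ∀ y u, y ⋖ u → WeaklySeparates x (lab y u) y u) {i : Fin (k + 1)} {y u : L}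
    (hyu : y ⋖ u) (hi : x i ⊓ u ≤ y) : i < (lab y u).succ := by
  by_contra! hle
  refine hyu.lt.not_ge ((hlm _).le_of_inf_le_of_le_sup hyu.le hi ?_)
  calc u ≤ x (lab y u).succ ⊔ u := le_sup_right
    _ = x (lab y u).succ ⊔ y := (hlab y u hyu).2
    _ ≤ x i ⊔ y := sup_le_sup_right (hx hle) y

theorem label_le_of_le_sup (hx : Monotone x) (hlm : ∀ i, IsLeftModular (x i))
    (hlab : ∀ y u, y ⋖ u → WeaklySeparates x (lab y u) y u) {i : Fin k} {y u : L}
    (hyu : y ⋖ u) (hi : u ≤ x i.succ ⊔ y) : lab y u ≤ i := by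
  by_contra! hlt
  refine hyu.lt.not_ge ((hlm _).le_of_inf_le_of_le_sup hyu.le ?_ hi)
  calc x i.succ ⊓ u ≤ x (lab y u).castSucc ⊓ u :=
        inf_le_inf_right u (hx (Fin.succ_le_castSucc_iff.2 hlt))
    _ = x (lab y u).castSucc ⊓ y := (hlab y u hyu).1
    _ ≤ y := inf_le_right

theorem inf_le_of_le_chainLabels (hlab : ∀ y u, y ⋖ u → WeaklySeparates x (lab y u) y u)
    {p : ℕ} {e : Fin (p + 1) → L} (he : IsCoverChain e) {i : Fin (k + 1)}
    (hi : ∀ j, x i ≤ x (chainLabels lab e j).castSucc) : x i ⊓ e (Fin.last p) ≤ e 0 := by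
  have hanti : Antitone fun s => x i ⊓ e s := by
    refine Fin.antitone_iff_succ_le.2 fun j => le_inf inf_le_left ?_
    calc x i ⊓ e j.succ ≤ x (chainLabels lab e j).castSucc ⊓ e j.succ :=
          inf_le_inf_right _ (hi j)
      _ = x (chainLabels lab e j).castSucc ⊓ e j.castSucc := (hlab _ _ (he j)).1
      _ ≤ e j.castSucc := inf_le_right
  exact (hanti (Fin.zero_le _)).trans inf_le_right

theorem exists_inf_le_and_not_inf_le [BoundedOrder L] (hbot : x 0 = ⊥)
    (htop : x (Fin.last k) = ⊤) {w z : L} (hwz : w < z) :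
    ∃ i : Fin k, x i.castSucc ⊓ z ≤ w ∧ ¬ x i.succ ⊓ z ≤ w :=
  Fin.exists_castSucc_and_not_succ (P := fun j => x j ⊓ z ≤ w) (by simp [hbot])
    (by simpa [htop] using hwz.not_ge)

theorem eq_sup_inf_of_label_eq {i : Fin k} (hcov : x i.castSucc ⋖ x i.succ)
    (hlm : ∀ i, IsLeftModular (x i)) (hlab : ∀ y u, y ⋖ u → WeaklySeparates x (lab y u) y u)
    {w z u : L} (h₁ : x i.castSucc ⊓ z ≤ w) (h₂ : ¬ x i.succ ⊓ z ≤ w) (hwu : w ⋖ u)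
    (huz : u ≤ z) (hl : lab w u = i) : u = w ⊔ (x i.succ ⊓ z) := by
  have hwz : w ≤ z := hwu.le.trans huz
  have hu : u ≤ w ⊔ (x i.succ ⊓ z) := by
    rw [← hlm _ w z hwz, sup_comm]
    exact le_inf (le_sup_right.trans_eq (hl ▸ (hlab w u hwu).2)) huz
  exact ((hcov.covBy_sup_inf (hlm _) (hlm _) hwz h₁ h₂).eq_or_eq hwu.le hu).resolve_left
    hwu.lt.ne'

theorem le_chainLabels_zero (hx : Monotone x) (hlm : ∀ i, IsLeftModular (x i))
    (hlab : ∀ y u, y ⋖ u → WeaklySeparates x (lab y u) y u) {p : ℕ} {e : Fin (p + 2) → L}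
    (he : IsCoverChain e) {i : Fin k} (h₁ : x i.castSucc ⊓ e (Fin.last _) ≤ e 0) :
    i ≤ chainLabels lab e 0 :=
  Fin.castSucc_lt_succ_iff.1 <| lt_label_succ_of_inf_le hx hlm hlab (he 0)
    ((inf_le_inf_left _ (he.le_last _)).trans h₁)

theorem chainLabels_zero_le (hx : Monotone x)
    (hlab : ∀ y u, y ⋖ u → WeaklySeparates x (lab y u) y u) {p : ℕ} {e : Fin (p + 2) → L}
    (he : IsCoverChain e) (hmono : Monotone (chainLabels lab e)) {i : Fin k}
    (h₂ : ¬ x i.succ ⊓ e (Fin.last _) ≤ e 0) : chainLabels lab e 0 ≤ i := by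
  by_contra! hlt
  exact h₂ (inf_le_of_le_chainLabels hlab he fun j =>
    hx (Fin.succ_le_castSucc_iff.2 (hlt.trans_le (hmono (Fin.zero_le j)))))

theorem exists_coverChain_monotone_chainLabels [BoundedOrder L] [WellFoundedGT L]
    (hbot : x 0 = ⊥) (htop : x (Fin.last k) = ⊤) (hcov : IsCoverChain x)
    (hlm : ∀ i, IsLeftModular (x i)) (hlab : ∀ y u, y ⋖ u → WeaklySeparates x (lab y u) y u)
    {w z : L} (hwz : w ≤ z) :
    ∃ (n : ℕ) (d : Fin (n + 1) → L), d 0 = w ∧ d (Fin.last n) = z ∧ IsCoverChain d ∧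
      Monotone (chainLabels lab d) := by
  have hx : Monotone x := hcov.strictMono.monotone
  induction w using WellFoundedGT.induction with
  | _ w ih =>
  rcases hwz.eq_or_lt with rfl | hlt
  · exact ⟨0, fun _ => w, rfl, rfl, fun j => j.elim0, fun j => j.elim0⟩
  obtain ⟨i, h₁, h₂⟩ := exists_inf_le_and_not_inf_le hbot htop hlt
  have hww' : w ⋖ w ⊔ (x i.succ ⊓ z) := (hcov i).covBy_sup_inf (hlm _) (hlm _) hwz h₁ h₂
  obtain ⟨n, d, hd0, hdl, hd, hdm⟩ := ih _ hww'.lt (sup_le hwz inf_le_right)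
  have hwd : ∀ j, d 0 ≤ d j := fun j => hd.strictMono.monotone (Fin.zero_le j)
  refine ⟨n + 1, Fin.cons w d, rfl, by rw [Fin.cons_last, hdl], hd.cons (hd0 ▸ hww'), ?_⟩
  have hwi : lab w (d 0) ≤ i := by
    refine label_le_of_le_sup hx hlm hlab (hd0 ▸ hww') ?_
    rw [hd0, sup_comm]
    exact sup_le_sup_right inf_le_left w
  have hid : ∀ j, i < chainLabels lab d j := fun j => by
    refine Fin.succ_lt_succ_iff.1 (lt_label_succ_of_inf_le hx hlm hlab (hd j) ?_)
    calc x i.succ ⊓ d j.succ ≤ x i.succ ⊓ z := inf_le_inf_left _ (hdl ▸ hd.le_last _)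
      _ ≤ d 0 := hd0 ▸ le_sup_right
      _ ≤ d j.castSucc := hwd _
  rw [chainLabels_cons]
  exact Fin.monotone_cons hdm fun j => hwi.trans (hid j).le

theorem lex_chainLabels_lt_of_range_ne [BoundedOrder L] (hbot : x 0 = ⊥)
    (htop : x (Fin.last k) = ⊤) (hcov : IsCoverChain x)
    (hlm : ∀ i, IsLeftModular (x i)) (hlab : ∀ y u, y ⋖ u → WeaklySeparates x (lab y u) y u)
    {n p : ℕ} {d : Fin (n + 1) → L} {e : Fin (p + 1) → L} (hd : IsCoverChain d)
    (hdm : Monotone (chainLabels lab d)) (he : IsCoverChain e) (h0 : e 0 = d 0)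
    (hl : e (Fin.last p) = d (Fin.last n)) (hne : Set.range e ≠ Set.range d) :
    List.Lex (· < ·) (List.ofFn fun j => (chainLabels lab d j : ℕ))
      (List.ofFn fun j => (chainLabels lab e j : ℕ)) := by
  have hx : Monotone x := hcov.strictMono.monotone
  induction p generalizing n d with
  | zero =>
    obtain rfl : n = 0 := hd.eq_zero_iff.2 (h0.symm.trans hl)
    refine (hne (congrArg Set.range (funext fun j => ?_))).elim
    rw [Fin.fin_one_eq_zero j, h0]
  | succ p ih =>
    cases n with
    | zero =>
      exact absurd (he.eq_zero_iff.2 (h0.trans ((hd.eq_zero_iff.1 rfl).trans hl.symm)))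
        p.succ_ne_zero
    | succ n =>
    obtain ⟨i, h₁, h₂⟩ :=
      exists_inf_le_and_not_inf_le hbot htop (hd.strictMono (Fin.last_pos' ..))
    have hdi : chainLabels lab d 0 = i :=
      le_antisymm (chainLabels_zero_le hx hlab hd hdm h₂)
        (le_chainLabels_zero hx hlm hlab hd h₁)
    have h₁e : x i.castSucc ⊓ e (Fin.last _) ≤ e 0 := by rwa [h0, hl]
    have h₂e : ¬ x i.succ ⊓ e (Fin.last _) ≤ e 0 := by rwa [h0, hl]
    have hei : i ≤ chainLabels lab e 0 := le_chainLabels_zero hx hlm hlab he h₁e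
    rw [List.ofFn_succ, List.ofFn_succ, hdi]
    rcases hei.lt_or_eq with hlt | heq
    · exact List.Lex.rel hlt
    rw [← heq]
    have hdm' : Monotone (chainLabels lab (Fin.tail d)) :=
      fun a b hab => hdm (Fin.succ_le_succ_iff.2 hab)
    refine List.Lex.cons (ih hd.tail hdm' he.tail ?_ hl fun h => hne ?_)
    · show e (Fin.succ 0) = d (Fin.succ 0)
      rw [eq_sup_inf_of_label_eq (hcov i) hlm hlab h₁ h₂ (hd 0) (hd.le_last _) hdi,
        eq_sup_inf_of_label_eq (hcov i) hlm hlab h₁e h₂e (he 0) (he.le_last _) heq.symm, h0, hl]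
    · rw [Fin.range_fin_succ e, Fin.range_fin_succ d, h, h0]

end WeakSeparation

/-- Liu's theorem.  If `⊥ = x₀ ⋖ x₁ ⋖ ⋯ ⋖ x_k = ⊤` is a maximal chain of left
modular elements of a finite lattice `L`, then the weak-separation labeling
`lab` is an EL-labeling: every interval `[w, z]` has exactly one maximal chain
with weakly increasing labels, and its label sequence is strictly
lexicographically smaller than that of every other maximal chain of `[w, z]`. -/
theorem leftModular_EL_labeling {L : Type*} [Lattice L]
    [BoundedOrder L] [Fintype L] {k : ℕ} (x : Fin (k + 1) → L)
    (hbot : x 0 = ⊥) (htop : x (Fin.last k) = ⊤)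
    (hcov : ∀ i : Fin k, x i.castSucc ⋖ x i.succ)
    (hlm : ∀ i : Fin (k + 1), ∀ y z : L, y ≤ z →
      (y ⊔ x i) ⊓ z = y ⊔ (x i ⊓ z))
    -- the labeling by weak separation
    (lab : L → L → Fin k)
    (hlab : ∀ y z : L, y ⋖ z →
      x (lab y z).castSucc ⊓ z = x (lab y z).castSucc ⊓ y ∧
        x (lab y z).succ ⊔ z = x (lab y z).succ ⊔ y) :
    ∀ w z : L, w ≤ z →
      ∃ (n : ℕ) (d : Fin (n + 1) → L),
        (d 0 = w ∧ d (Fin.last n) = z ∧ (∀ j : Fin n, d j.castSucc ⋖ d j.succ) ∧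
          Monotone (fun j : Fin n => lab (d j.castSucc) (d j.succ))) ∧
        ∀ (p : ℕ) (e : Fin (p + 1) → L), e 0 = w → e (Fin.last p) = z →
          (∀ j : Fin p, e j.castSucc ⋖ e j.succ) →
          (Monotone (fun j : Fin p => lab (e j.castSucc) (e j.succ)) →
            Set.range e = Set.range d) ∧
          (Set.range e ≠ Set.range d →
            List.Lex (· < ·)
              (List.ofFn (fun j : Fin n => ((lab (d j.castSucc) (d j.succ) : Fin k) : ℕ)))
              (List.ofFn (fun j : Fin p => ((lab (e j.castSucc) (e j.succ) : Fin k) : ℕ)))) := by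
  intro w z hwz
  obtain ⟨n, d, hd0, hdl, hd, hdm⟩ :=
    exists_coverChain_monotone_chainLabels hbot htop hcov hlm hlab hwz
  refine ⟨n, d, ⟨hd0, hdl, hd, hdm⟩, fun p e he0 hel he =>
    ⟨fun hem => ?_, fun hne => ?_⟩⟩
  · by_contra hne
    exact asymm
      (lex_chainLabels_lt_of_range_ne hbot htop hcov hlm hlab hd hdm he (he0.trans hd0.symm)
        (hel.trans hdl.symm) hne)
      (lex_chainLabels_lt_of_range_ne hbot htop hcov hlm hlab he hem hd (hd0.trans he0.symm)
        (hdl.trans hel.symm) (Ne.symm hne))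
  · exact lex_chainLabels_lt_of_range_ne hbot htop hcov hlm hlab hd hdm he (he0.trans hd0.symm)
      (hel.trans hdl.symm) hne
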